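/- arXiv:2005.04036 — 4 statements merged into one kernel-verified Lean document; each statement's English description precedes it below -/
import Mathlib

section
/- Let w > 0, 0 < p ≤ 1, c ∈ ℝ, and x ∈ ℕ. Define C(X,c) = wX/2 + c(2−p)/(X+1) for X ∈ ℕ. Then C(x+1,c) ≤ C(x,c) if and only if c ≥ w(x+1)(x+2)/(2(2−p)). Consequently, the set of states for which idling (a smaller threshold) is preferable grows monotonically as c increases, i.e., the problem is indexable with Whittle index W(x,p) = w(x+1)(x+2)/(2(2−p)). -/
/-!
The cost `C(X) = wX/2 + c(2-p)/(X+1)` has increments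
`C(X+1) - C(X) = w/2 - c(2-p)/((X+1)(X+2))`, so raising the threshold by one
pays off exactly when `c(2-p)/((X+1)(X+2)) ≥ w/2`; since `2 - p > 0` this is
linear in `c`, which gives the Whittle index `w(x+1)(x+2)/(2(2-p))`.
-/

/-- `C(X,c)` with the factor `2 - p` abstracted as `a`. -/
noncomputable def thresholdCost (w a c X : ℝ) : ℝ := w * X / 2 + c * a / (X + 1)

lemma thresholdCost_succ_sub {w a c t : ℝ} (ht : 0 ≤ t) :
    thresholdCost w a c (t + 1) - thresholdCost w a c t
      = w / 2 - c * a / ((t + 1) * (t + 2)) := by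
  unfold thresholdCost
  field_simp
  ring

lemma thresholdCost_succ_le_iff {w a c t : ℝ} (ha : 0 < a) (ht : 0 ≤ t) :
    thresholdCost w a c (t + 1) ≤ thresholdCost w a c t
      ↔ w * (t + 1) * (t + 2) / (2 * a) ≤ c := by
  have hden : 0 < (t + 1) * (t + 2) := by positivity
  rw [← sub_nonpos, thresholdCost_succ_sub ht, sub_nonpos, le_div_iff₀ hden,
    div_le_iff₀ (by positivity)]
  constructor <;> intro h <;> linarith

theorem stmt_4_general (w p c : ℝ) (hp1 : p ≤ 1) (x : ℕ) :
    (w * ((x : ℝ) + 1) / 2 + c * (2 - p) / ((x : ℝ) + 1 + 1)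
      ≤ w * (x : ℝ) / 2 + c * (2 - p) / ((x : ℝ) + 1))
    ↔ c ≥ w * ((x : ℝ) + 1) * ((x : ℝ) + 2) / (2 * (2 - p)) :=
  thresholdCost_succ_le_iff (by linarith) x.cast_nonneg

/-- Indexability without CSI: with `C(X,c) = wX/2 + c(2-p)/(X+1)`, threshold
`x+1` is (weakly) preferable to threshold `x` iff the playing charge satisfies
`c ≥ w(x+1)(x+2)/(2(2-p))`, the Whittle index of state `x`. -/
theorem stmt_4 (w p c : ℝ) (hw : 0 < w) (hp0 : 0 < p) (hp1 : p ≤ 1) (x : ℕ) :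
    (w * ((x : ℝ) + 1) / 2 + c * (2 - p) / ((x : ℝ) + 1 + 1)
      ≤ w * (x : ℝ) / 2 + c * (2 - p) / ((x : ℝ) + 1))
    ↔ c ≥ w * ((x : ℝ) + 1) * ((x : ℝ) + 2) / (2 * (2 - p)) :=
  stmt_4_general w p c hp1 x
end

section
/- Let w ≥ 0, 0 ≤ p ≤ 1, γ ≥ 0, c ∈ ℝ. Define a sequence of functions Vₙ : ℕ → ℝ by V₀(x) = 0 for all x, and V_{n+1}(x) = min( wp + wx + γ(p Vₙ(x+1) + (1−p) Vₙ(x)), c + (1−p)wx + γ(p Vₙ(0) + (1−p) Vₙ(x)) ). Then for every n ∈ ℕ, Vₙ is nondecreasing in x. -/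
theorem monotone_valueIteration_step {w p γ : ℝ} (c : ℝ) (hw : 0 ≤ w) (hp0 : 0 ≤ p)
    (hp1 : p ≤ 1) (hγ : 0 ≤ γ) {f : ℕ → ℝ} (hf : Monotone f) :
    Monotone fun x : ℕ =>
      min (w * p + w * (x : ℝ) + γ * (p * f (x + 1) + (1 - p) * f x))
          (c + (1 - p) * w * (x : ℝ) + γ * (p * f 0 + (1 - p) * f x)) := by
  have hq : 0 ≤ 1 - p := sub_nonneg.mpr hp1
  have hcast : Monotone (fun x : ℕ => (x : ℝ)) := Nat.mono_cast
  have hshift : Monotone (fun x : ℕ => f (x + 1)) := hf.comp fun _ _ h => Nat.succ_le_succ h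
  have hidle : Monotone fun x : ℕ =>
      w * p + w * (x : ℝ) + γ * (p * f (x + 1) + (1 - p) * f x) :=
    (monotone_const.add (hcast.const_mul hw)).add
      (((hshift.const_mul hp0).add (hf.const_mul hq)).const_mul hγ)
  have hschedule : Monotone fun x : ℕ =>
      c + (1 - p) * w * (x : ℝ) + γ * (p * f 0 + (1 - p) * f x) :=
    (monotone_const.add (hcast.const_mul (mul_nonneg hq hw))).add
      ((monotone_const.add (hf.const_mul hq)).const_mul hγ)
  exact hidle.min hschedule

/-- Value iteration for the subproblem without CSI: with `V 0 ≡ 0` and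
`V (n+1) x = min (wp + wx + γ(p V n (x+1) + (1-p) V n x))
             (c + (1-p)wx + γ(p V n 0 + (1-p) V n x))`,
every iterate `V n` is nondecreasing in the age `x`. -/
theorem stmt_8 (w p γ c : ℝ) (hw : 0 ≤ w) (hp0 : 0 ≤ p) (hp1 : p ≤ 1) (hγ : 0 ≤ γ)
    (V : ℕ → ℕ → ℝ)
    (hV0 : ∀ x : ℕ, V 0 x = 0)
    (hVrec : ∀ n x : ℕ, V (n + 1) x =
      min (w * p + w * (x : ℝ) + γ * (p * V n (x + 1) + (1 - p) * V n x))
          (c + (1 - p) * w * (x : ℝ) + γ * (p * V n 0 + (1 - p) * V n x))) :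
    ∀ n : ℕ, Monotone (V n) := by
  intro n
  induction n with
  | zero => simpa only [funext hV0] using monotone_const
  | succ n ih =>
    rw [show V (n + 1) = _ from funext (hVrec n)]
    exact monotone_valueIteration_step c hw hp0 hp1 hγ ih
end

section
/- Let w ≥ 0, 0 < p ≤ 1, 0 < γ ≤ 1, c ∈ ℝ, and let V : ℕ → ℝ be nonnegative and satisfy, for all x ∈ ℕ, the optimality equation V(x) = min( wp + wx + γ(p V(x+1) + (1−p) V(x)), c + (1−p)wx + γ(p V(0) + (1−p) V(x)) ). Then for all x ∈ ℕ, p(V(x) − V(0)) ≤ c + (1−p)wx. -/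
/-! Only the scheduling branch of the optimality equation is needed: `p (v - v₀)` is `v` minus
the undiscounted expected continuation `p v₀ + (1 - p) v`, and discounting by `γ ≤ 1` can only
shrink that nonnegative continuation. -/

theorem mul_sub_le_of_le_add_discounted_reset {p γ a v v₀ : ℝ} (hp0 : 0 ≤ p) (hp1 : p ≤ 1)
    (hγ1 : γ ≤ 1) (hv : 0 ≤ v) (hv₀ : 0 ≤ v₀) (h : v ≤ a + γ * (p * v₀ + (1 - p) * v)) :
    p * (v - v₀) ≤ a := by
  have hcont : 0 ≤ p * v₀ + (1 - p) * v := by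
    have := sub_nonneg.2 hp1
    positivity
  calc p * (v - v₀) = v - (p * v₀ + (1 - p) * v) := by ring
    _ ≤ v - γ * (p * v₀ + (1 - p) * v) := by
        gcongr
        exact mul_le_of_le_one_left hcont hγ1
    _ ≤ a := by linarith

theorem stmt_9_general (w p γ c : ℝ) (hp0 : 0 < p) (hp1 : p ≤ 1)
    (hγ1 : γ ≤ 1)
    (V : ℕ → ℝ) (hVnn : ∀ x : ℕ, 0 ≤ V x)
    (hV : ∀ x : ℕ, V x =
      min (w * p + w * (x : ℝ) + γ * (p * V (x + 1) + (1 - p) * V x))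
          (c + (1 - p) * w * (x : ℝ) + γ * (p * V 0 + (1 - p) * V x))) :
    ∀ x : ℕ, p * (V x - V 0) ≤ c + (1 - p) * w * (x : ℝ) := fun x =>
  mul_sub_le_of_le_add_discounted_reset hp0.le hp1 hγ1 (hVnn x) (hVnn 0)
    ((hV x).le.trans (min_le_right _ _))

/-- Bound on the relative cost function (no CSI): if `V ≥ 0` satisfies the
discounted optimality equation, then `p(V(x) - V(0)) ≤ c + (1-p)wx`. -/
theorem stmt_9 (w p γ c : ℝ) (hw : 0 ≤ w) (hp0 : 0 < p) (hp1 : p ≤ 1)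
    (hγ0 : 0 < γ) (hγ1 : γ ≤ 1)
    (V : ℕ → ℝ) (hVnn : ∀ x : ℕ, 0 ≤ V x)
    (hV : ∀ x : ℕ, V x =
      min (w * p + w * (x : ℝ) + γ * (p * V (x + 1) + (1 - p) * V x))
          (c + (1 - p) * w * (x : ℝ) + γ * (p * V 0 + (1 - p) * V x))) :
    ∀ x : ℕ, p * (V x - V 0) ≤ c + (1 - p) * w * (x : ℝ) :=
  stmt_9_general w p γ c hp0 hp1 hγ1 V hVnn hV
end

section
/- Let w ≥ 0, 0 ≤ p ≤ 1, γ ≥ 0, c ∈ ℝ, and let V : ℕ → ℝ be nondecreasing. If, for some x ∈ ℕ, c + (1−p)wx + γ(p V(0) + (1−p) V(x)) < wp + wx + γ(p V(x+1) + (1−p) V(x)), then also c + (1−p)w(x+1) + γ(p V(0) + (1−p) V(x+1)) < wp + w(x+1) + γ(p V(x+2) + (1−p) V(x+1)). -/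
theorem stmt_10_general (w p γ c : ℝ) (hw : 0 ≤ w) (hp0 : 0 ≤ p) (hγ : 0 ≤ γ)
    (V : ℕ → ℝ) (hV : Monotone V) (x : ℕ)
    (hx : c + (1 - p) * w * (x : ℝ) + γ * (p * V 0 + (1 - p) * V x)
        < w * p + w * (x : ℝ) + γ * (p * V (x + 1) + (1 - p) * V x)) :
    c + (1 - p) * w * ((x : ℝ) + 1) + γ * (p * V 0 + (1 - p) * V (x + 1))
        < w * p + w * ((x : ℝ) + 1) + γ * (p * V (x + 2) + (1 - p) * V (x + 1)) := by
  -- Idling minus scheduling in state `x` is `w p (x + 1) - c + γ p (V (x + 1) - V 0)`;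
  -- passing from `x` to `x + 1` adds the nonnegative increment below.
  have hV_step : 0 ≤ V (x + 2) - V (x + 1) := sub_nonneg.2 (hV (Nat.le_succ _))
  have hgap_step : 0 ≤ w * p + γ * p * (V (x + 2) - V (x + 1)) := by positivity
  linear_combination hx + hgap_step

/-- Threshold structure of the γ-optimal policy (no CSI): for a nondecreasing
value function `V`, if scheduling is strictly better than idling in state `x`,
then it is strictly better in state `x+1` as well. -/
theorem stmt_10 (w p γ c : ℝ) (hw : 0 ≤ w) (hp0 : 0 ≤ p) (hp1 : p ≤ 1) (hγ : 0 ≤ γ)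
    (V : ℕ → ℝ) (hV : Monotone V) (x : ℕ)
    (hx : c + (1 - p) * w * (x : ℝ) + γ * (p * V 0 + (1 - p) * V x)
        < w * p + w * (x : ℝ) + γ * (p * V (x + 1) + (1 - p) * V x)) :
    c + (1 - p) * w * ((x : ℝ) + 1) + γ * (p * V 0 + (1 - p) * V (x + 1))
        < w * p + w * ((x : ℝ) + 1) + γ * (p * V (x + 2) + (1 - p) * V (x + 1)) :=
  stmt_10_general w p γ c hw hp0 hγ V hV x hx
end
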